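/- Let z₁, …, z_N ∈ ℝ, w₁, …, w_N ≥ 0, fix μ ∈ ℝ, λ ∈ ℝ and ℓ > 0, and let k(z, σ) = (2/σ) φ((z−μ)/σ) Φ(λ(z−μ)/σ). Let Ĝ be a probability measure on (0,∞) with support in [ℓ, ∞), and define D_Ĝ(σ) = Σ_{i=1}^N w_i · k(z_i, σ)/∫ k(z_i, s) dĜ(s) − Σ_{i=1}^N w_i. If D_Ĝ(σ) ≤ 0 for every σ ≥ ℓ, then Ĝ is a global maximizer of ℓ̃ over all probability measures with support in [ℓ, ∞): ℓ̃(G) ≤ ℓ̃(Ĝ) for every such G, where ℓ̃(G) = Σ_{i=1}^N w_i log ∫ k(z_i, σ) dG(σ). -/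

import Mathlib

open MeasureTheory Filter

/-- Standard normal density. -/
noncomputable def stdPhi (z : ℝ) : ℝ := Real.exp (-(z ^ 2) / 2) / Real.sqrt (2 * Real.pi)

/-- Standard normal cumulative distribution function. -/
noncomputable def stdPhiCDF (z : ℝ) : ℝ := ∫ t in Set.Iic z, stdPhi t

/-- Skew-normal kernel `k(z, σ)` with fixed location `μ` and shape `lam`. -/
noncomputable def snKer (μ lam z σ : ℝ) : ℝ :=
  (2 / σ) * stdPhi ((z - μ) / σ) * stdPhiCDF (lam * ((z - μ) / σ))

/-- Weighted mixture log-likelihood `ℓ̃(G) = Σᵢ wᵢ log ∫ k(zᵢ, σ) dG(σ)`. -/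
noncomputable def ltilde {N : ℕ} (w z : Fin N → ℝ) (μ lam : ℝ) (G : Measure ℝ) : ℝ :=
  ∑ i, w i * Real.log (∫ σ, snKer μ lam (z i) σ ∂G)

/-!
Since `log x ≤ x - 1`, `ℓ̃(G) - ℓ̃(Ĝ) ≤ Σᵢ wᵢ (∫ k(zᵢ, ·) dG / ∫ k(zᵢ, ·) dĜ) - Σᵢ wᵢ = ∫ D_Ĝ dG`,
and this is `≤ 0` because `D_Ĝ ≤ 0` on `[ℓ, ∞)`, which carries `G`. On `[ℓ, ∞)` the kernel is
positive and bounded by `(2/ℓ) φ(0)`, so all the integrals involved are finite and positive.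
-/

section MixtureLikelihood

variable {ι : Type*} [Fintype ι] {w a b : ι → ℝ}

theorem sum_mul_log_sub_sum_mul_log_le (hw : ∀ i, 0 ≤ w i) (ha : ∀ i, 0 < a i)
    (hb : ∀ i, 0 < b i) :
    ∑ i, w i * Real.log (a i) - ∑ i, w i * Real.log (b i) ≤
      ∑ i, w i * (a i / b i) - ∑ i, w i := by
  rw [← Finset.sum_sub_distrib, ← Finset.sum_sub_distrib]
  refine Finset.sum_le_sum fun i _ => ?_
  calc w i * Real.log (a i) - w i * Real.log (b i)
      = w i * Real.log (a i / b i) := by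
        rw [Real.log_div (ha i).ne' (hb i).ne']; ring
    _ ≤ w i * (a i / b i - 1) :=
        mul_le_mul_of_nonneg_left (Real.log_le_sub_one_of_pos (div_pos (ha i) (hb i))) (hw i)
    _ = w i * (a i / b i) - w i := by ring

variable {Ω : Type*} [MeasurableSpace Ω] {G : Measure Ω} [IsProbabilityMeasure G]
  {f : ι → Ω → ℝ}

theorem sum_mul_log_integral_le_of_ae_le (hw : ∀ i, 0 ≤ w i) (hf : ∀ i, Integrable (f i) G)
    (hf_pos : ∀ i, 0 < ∫ x, f i x ∂G) (hb : ∀ i, 0 < b i)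
    (hD : ∀ᵐ x ∂G, ∑ i, w i * (f i x / b i) ≤ ∑ i, w i) :
    ∑ i, w i * Real.log (∫ x, f i x ∂G) ≤ ∑ i, w i * Real.log (b i) := by
  have hmean : ∑ i, w i * ((∫ x, f i x ∂G) / b i) ≤ ∑ i, w i :=
    calc ∑ i, w i * ((∫ x, f i x ∂G) / b i)
        = ∫ x, ∑ i, w i * (f i x / b i) ∂G := by
          rw [integral_finsetSum _ fun i _ => ((hf i).div_const _).const_mul _]
          simp only [integral_const_mul, integral_div]
      _ ≤ ∫ _, ∑ i, w i ∂G :=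
          integral_mono_ae (integrable_finsetSum _ fun i _ => ((hf i).div_const _).const_mul _)
            (integrable_const _) hD
      _ = ∑ i, w i := by simp
  linarith [sum_mul_log_sub_sum_mul_log_le hw hf_pos hb]

end MixtureLikelihood

theorem integral_pos_of_ae_pos {α : Type*} [MeasurableSpace α] {μ : Measure α} [NeZero μ]
    {f : α → ℝ} (hfi : Integrable f μ) (hf : ∀ᵐ x ∂μ, 0 < f x) : 0 < ∫ x, f x ∂μ := by
  rw [integral_pos_iff_support_of_nonneg_ae (hf.mono fun _ hx => hx.le) hfi, pos_iff_ne_zero]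
  intro h
  obtain ⟨x, hx, hx0⟩ := (hf.and (measure_eq_zero_iff_ae_notMem.mp h)).exists
  exact hx0 hx.ne'

theorem ae_le_of_measure_Iio_eq_zero {μ : Measure ℝ} {ℓ : ℝ} (h : μ (Set.Iio ℓ) = 0) :
    ∀ᵐ σ ∂μ, ℓ ≤ σ := by
  simp only [ae_iff, not_le]
  exact h

theorem stdPhi_eq_gaussianPDFReal : stdPhi = ProbabilityTheory.gaussianPDFReal 0 1 := by
  ext z
  simp [stdPhi, ProbabilityTheory.gaussianPDFReal, div_eq_inv_mul]

theorem stdPhi_pos (z : ℝ) : 0 < stdPhi z := by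
  unfold stdPhi; positivity

theorem stdPhi_le_stdPhi_zero (z : ℝ) : stdPhi z ≤ stdPhi 0 := by
  unfold stdPhi
  gcongr Real.exp ?_ / _
  nlinarith [sq_nonneg z]

theorem integrable_stdPhi : Integrable stdPhi :=
  stdPhi_eq_gaussianPDFReal ▸ ProbabilityTheory.integrable_gaussianPDFReal 0 1

theorem stdPhiCDF_pos (z : ℝ) : 0 < stdPhiCDF z :=
  have : NeZero (volume.restrict (Set.Iic z)) := ⟨by simp [Measure.restrict_eq_zero]⟩
  integral_pos_of_ae_pos integrable_stdPhi.integrableOn (ae_of_all _ stdPhi_pos)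

theorem stdPhiCDF_le_one (z : ℝ) : stdPhiCDF z ≤ 1 := by
  calc stdPhiCDF z ≤ ∫ t, stdPhi t :=
        setIntegral_le_integral integrable_stdPhi (ae_of_all _ fun t => (stdPhi_pos t).le)
    _ = 1 := by
        rw [stdPhi_eq_gaussianPDFReal, ProbabilityTheory.integral_gaussianPDFReal_eq_one 0 one_ne_zero]

theorem stdPhiCDF_mono : Monotone stdPhiCDF := fun _ _ hab =>
  setIntegral_mono_set integrable_stdPhi.integrableOn (ae_of_all _ fun t => (stdPhi_pos t).le)
    (Set.Iic_subset_Iic.mpr hab).eventuallyLE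

theorem measurable_snKer (μ lam z : ℝ) : Measurable (snKer μ lam z) := by
  have := stdPhiCDF_mono.measurable
  have : Continuous stdPhi := by unfold stdPhi; fun_prop
  unfold snKer
  fun_prop

theorem snKer_pos (μ lam z : ℝ) {σ : ℝ} (hσ : 0 < σ) : 0 < snKer μ lam z σ := by
  have := stdPhi_pos ((z - μ) / σ)
  have := stdPhiCDF_pos (lam * ((z - μ) / σ))
  unfold snKer; positivity

theorem snKer_le (μ lam z : ℝ) {ℓ σ : ℝ} (hℓ : 0 < ℓ) (hσ : ℓ ≤ σ) :
    snKer μ lam z σ ≤ 2 / ℓ * stdPhi 0 := by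
  have := stdPhi_pos 0
  calc snKer μ lam z σ ≤ 2 / ℓ * stdPhi 0 * 1 := by
        unfold snKer
        gcongr
        · exact (stdPhiCDF_pos _).le
        · exact (stdPhi_pos _).le
        · exact stdPhi_le_stdPhi_zero _
        · exact stdPhiCDF_le_one _
    _ = 2 / ℓ * stdPhi 0 := mul_one _

section SupportedAwayFromZero

variable {ν : Measure ℝ} {ℓ : ℝ}

theorem integrable_snKer [IsFiniteMeasure ν] (μ lam z : ℝ) (hℓ : 0 < ℓ)
    (hν : ν (Set.Iio ℓ) = 0) : Integrable (snKer μ lam z) ν := by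
  refine Integrable.mono' (integrable_const (2 / ℓ * stdPhi 0))
    (measurable_snKer μ lam z).aestronglyMeasurable ?_
  filter_upwards [ae_le_of_measure_Iio_eq_zero hν] with σ hσ
  rw [Real.norm_of_nonneg (snKer_pos μ lam z (hℓ.trans_le hσ)).le]
  exact snKer_le μ lam z hℓ hσ

theorem integral_snKer_pos [IsFiniteMeasure ν] [NeZero ν] (μ lam z : ℝ) (hℓ : 0 < ℓ)
    (hν : ν (Set.Iio ℓ) = 0) : 0 < ∫ σ, snKer μ lam z σ ∂ν :=
  integral_pos_of_ae_pos (integrable_snKer μ lam z hℓ hν)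
    ((ae_le_of_measure_Iio_eq_zero hν).mono fun _ hσ => snKer_pos μ lam z (hℓ.trans_le hσ))

end SupportedAwayFromZero

theorem stmt15 (N : ℕ) (z w : Fin N → ℝ) (hw : ∀ i, 0 ≤ w i)
    (μ lam ℓ : ℝ) (hℓ : 0 < ℓ)
    (Ghat : Measure ℝ) (hGhat : IsProbabilityMeasure Ghat) (hsupp : Ghat (Set.Iio ℓ) = 0)
    (hD : ∀ σ : ℝ, ℓ ≤ σ →
      (∑ i, w i * (snKer μ lam (z i) σ / ∫ s, snKer μ lam (z i) s ∂Ghat)) - ∑ i, w i ≤ 0) :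
    ∀ G : Measure ℝ, IsProbabilityMeasure G → G (Set.Iio ℓ) = 0 →
      ltilde w z μ lam G ≤ ltilde w z μ lam Ghat := by
  intro G hG hGsupp
  refine sum_mul_log_integral_le_of_ae_le hw (fun i => integrable_snKer μ lam (z i) hℓ hGsupp)
    (fun i => integral_snKer_pos μ lam (z i) hℓ hGsupp)
    (fun i => integral_snKer_pos μ lam (z i) hℓ hsupp) ?_
  filter_upwards [ae_le_of_measure_Iio_eq_zero hGsupp] with σ hσ
  linarith [hD σ hσ]
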